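/- Let γ : ℕ → ℝ be nonnegative and nonincreasing (0 ≤ γ(s) ≤ γ(t) whenever s ≥ t). Then for all integers n ≥ 1 and d ≥ 1, d·S(n, d) ≤ S(n·d, 1), where S(n, d) = Σ_{k=1}^{n} Σ_{l=1}^{n} γ(d·|k−l|). Equivalently, the variance σ²(ȳ_b) = S(n,d)/n² of the average of n samples taken every d cycles and the variance σ²(ȳ_a) = S(nd,1)/(nd)² of the average of all nd consecutive samples satisfy σ²(ȳ_b)/d ≤ σ²(ȳ_a). (Left inequality of Theorem 5.2 / Eq. (23).) -/

import Mathlib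

open Finset

/-!
Cut the `n * d` consecutive samples into `n` blocks of `d`. Then `S(n * d, 1)` is a sum over
pairs of blocks `(k, l)` of `d²` terms, and the `d` terms pairing equal offsets in the two blocks
are all `γ (d * |k - l|)`; as `γ ≥ 0`, dropping the other terms gives `d * S(n, d)`.
-/

theorem sum_Icc_one_eq_sum_range {M : Type*} [AddCommMonoid M] (f : ℕ → M) (m : ℕ) :
    ∑ x ∈ Icc 1 m, f x = ∑ x ∈ range m, f (x + 1) := by
  rw [range_eq_Ico, sum_Ico_add', zero_add, Ico_add_one_right_eq_Icc]

theorem sum_range_mul_eq_sum_sum {M : Type*} [AddCommMonoid M] (f : ℕ → M) (n d : ℕ) :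
    ∑ x ∈ range (n * d), f x = ∑ k ∈ range n, ∑ i ∈ range d, f (k * d + i) := by
  induction n with
  | zero => simp
  | succ n ih => rw [add_one_mul, sum_range_add, ih, sum_range_succ]

/-- The paper's `S(n, d)`, i.e. `n²` times the variance of the average of `n` samples taken
every `d` cycles. -/
def autocovSum (γ : ℕ → ℝ) (n d : ℕ) : ℝ :=
  ∑ k ∈ Icc 1 n, ∑ l ∈ Icc 1 n, γ (d * ((k : ℤ) - l).natAbs)

theorem autocovSum_eq_sum_range (γ : ℕ → ℝ) (n d : ℕ) :
    autocovSum γ n d = ∑ k ∈ range n, ∑ l ∈ range n, γ (d * ((k : ℤ) - l).natAbs) := by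
  simp only [autocovSum, sum_Icc_one_eq_sum_range, Nat.cast_add_one, add_sub_add_right_eq_sub]

theorem natAbs_mul_add_sub_mul_add (k l d i : ℕ) :
    (((k * d + i : ℕ) : ℤ) - (l * d + i : ℕ)).natAbs = d * ((k : ℤ) - l).natAbs := by
  have h : ((k * d + i : ℕ) : ℤ) - (l * d + i : ℕ) = (k - l) * d := by push_cast; ring
  rw [h, Int.natAbs_mul, Int.natAbs_natCast, mul_comm]

theorem autocovSum_mul_one_eq_sum_blocks (γ : ℕ → ℝ) (n d : ℕ) :
    autocovSum γ (n * d) 1 = ∑ k ∈ range n, ∑ l ∈ range n, ∑ i ∈ range d, ∑ j ∈ range d,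
      γ (((k * d + i : ℕ) : ℤ) - (l * d + j : ℕ)).natAbs := by
  simp only [autocovSum_eq_sum_range, one_mul, sum_range_mul_eq_sum_sum]
  exact sum_congr rfl fun _ _ => sum_comm

theorem mul_autocovSum_le_autocovSum_mul_one {γ : ℕ → ℝ} (hγ : ∀ t, 0 ≤ γ t) (n d : ℕ) :
    d * autocovSum γ n d ≤ autocovSum γ (n * d) 1 := by
  rw [autocovSum_eq_sum_range, autocovSum_mul_one_eq_sum_blocks]
  simp only [mul_sum]
  gcongr with k _ l _
  calc (d : ℝ) * γ (d * ((k : ℤ) - l).natAbs)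
      = ∑ i ∈ range d, γ (((k * d + i : ℕ) : ℤ) - (l * d + i : ℕ)).natAbs := by
        simp only [natAbs_mul_add_sub_mul_add, sum_const, card_range, nsmul_eq_mul]
    _ ≤ ∑ i ∈ range d, ∑ j ∈ range d, γ (((k * d + i : ℕ) : ℤ) - (l * d + j : ℕ)).natAbs := by
        gcongr with i hi
        exact single_le_sum (f := fun j => γ (((k * d + i : ℕ) : ℤ) - (l * d + j : ℕ)).natAbs)
          (fun _ _ => hγ _) hi

theorem div_sq_div_le_div_mul_sq {a b n d : ℝ} (h : d * a ≤ b) :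
    a / n ^ 2 / d ≤ b / (n * d) ^ 2 := by
  have : a / n ^ 2 / d = d * a / (n * d) ^ 2 := by
    rcases eq_or_ne d 0 with rfl | hd
    · simp
    · field_simp
  rw [this]
  exact div_le_div_of_nonneg_right h (sq_nonneg _)

theorem coarse_variance_lower_bound_general (γ : ℕ → ℝ)
    (hγpos : ∀ t, 0 ≤ γ t)
    (n d : ℕ) :
    (d : ℝ) * ∑ k ∈ Icc 1 n, ∑ l ∈ Icc 1 n, γ (d * ((k : ℤ) - (l : ℤ)).natAbs) ≤
      (∑ k ∈ Icc 1 (n * d), ∑ l ∈ Icc 1 (n * d), γ (1 * ((k : ℤ) - (l : ℤ)).natAbs)) ∧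
    ((∑ k ∈ Icc 1 n, ∑ l ∈ Icc 1 n, γ (d * ((k : ℤ) - (l : ℤ)).natAbs)) / (n : ℝ) ^ 2) / (d : ℝ)
      ≤ (∑ k ∈ Icc 1 (n * d), ∑ l ∈ Icc 1 (n * d), γ (1 * ((k : ℤ) - (l : ℤ)).natAbs)) /
          ((n : ℝ) * (d : ℝ)) ^ 2 := by
  have key : (d : ℝ) * autocovSum γ n d ≤ autocovSum γ (n * d) 1 :=
    mul_autocovSum_le_autocovSum_mul_one hγpos n d
  exact ⟨key, div_sq_div_le_div_mul_sq key⟩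

/-- For a nonnegative nonincreasing autocovariance `γ`, `d·S(n, d) ≤ S(n·d, 1)`
where `S(n, d) = Σ_{k=1}^{n} Σ_{l=1}^{n} γ(d·|k−l|)`; equivalently, the variance
`σ²(ȳ_b) = S(n,d)/n²` of the coarse average and the variance
`σ²(ȳ_a) = S(nd,1)/(nd)²` of the full average satisfy `σ²(ȳ_b)/d ≤ σ²(ȳ_a)`. -/
theorem coarse_variance_lower_bound (γ : ℕ → ℝ)
    (hγpos : ∀ t, 0 ≤ γ t) (hγ : Antitone γ)
    (n d : ℕ) (hn : 1 ≤ n) (hd : 1 ≤ d) :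
    (d : ℝ) * ∑ k ∈ Icc 1 n, ∑ l ∈ Icc 1 n, γ (d * ((k : ℤ) - (l : ℤ)).natAbs) ≤
      (∑ k ∈ Icc 1 (n * d), ∑ l ∈ Icc 1 (n * d), γ (1 * ((k : ℤ) - (l : ℤ)).natAbs)) ∧
    ((∑ k ∈ Icc 1 n, ∑ l ∈ Icc 1 n, γ (d * ((k : ℤ) - (l : ℤ)).natAbs)) / (n : ℝ) ^ 2) / (d : ℝ)
      ≤ (∑ k ∈ Icc 1 (n * d), ∑ l ∈ Icc 1 (n * d), γ (1 * ((k : ℤ) - (l : ℤ)).natAbs)) /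
          ((n : ℝ) * (d : ℝ)) ^ 2 :=
  coarse_variance_lower_bound_general γ hγpos n d
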